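/- arXiv:2303.00504 — 3 statements merged into one kernel-verified Lean document; each statement's English description precedes it below -/
import Mathlib

section
/- Let d ≥ 1. Let μ and ν be finite Borel measures on ℝ^d with compact support such that μ(ℝ^d) ≥ ν(ℝ^d), μ does not charge small sets, and μ and ν are mutually singular. Let ϑ : [0,∞) → [0,∞) be continuous, strictly concave and strictly increasing, and set c(x,y) = ϑ(|x−y|). Then every semicoupling q of μ and ν minimizing ∫ c dq among semicouplings has first marginal of the form 1_B · μ for some Borel set B ⊆ ℝ^d, i.e. the density of the first marginal of q with respect to μ is μ-a.e. {0,1}-valued. -/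
open MeasureTheory Filter Set

noncomputable section

/-- Euclidean space `ℝ^d`. -/
abbrev Eucl (d : ℕ) := EuclideanSpace ℝ (Fin d)

/-- The half-open unit cube `[0,1)^d`. -/
def unitCube (d : ℕ) : Set (Eucl d) := {x | ∀ i, x i ∈ Set.Ico (0 : ℝ) 1}

/-- `μ` does not charge small sets: it gives no mass to `(d-1)`-rectifiable sets,
i.e. `μ (f '' ℝ^(d-1)) = 0` for every Lipschitz map `f : ℝ^(d-1) → ℝ^d`. -/
def DoesNotChargeSmallSets (d : ℕ) (μ : Measure (Eucl d)) : Prop :=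
  ∀ (f : Eucl (d - 1) → Eucl d) (K : NNReal), LipschitzWith K f → μ (Set.range f) = 0

/-- `q` is a semicoupling of `μ` and `ν`: its first marginal is `≤ μ` and its second
marginal equals `ν`. -/
def IsSemicoupling {d : ℕ} (μ ν : Measure (Eucl d)) (q : Measure (Eucl d × Eucl d)) :
    Prop :=
  Measure.map Prod.fst q ≤ μ ∧ Measure.map Prod.snd q = ν

/-!
Let `η` be the first marginal of `q`, `θ = μ - η` the part of `μ` that `q` leaves unused, and `C`
the support of `θ`. If a pair `(x, y)` in the support of `q` had `|x₁ - y| < |x - y|` for some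
`x₁ ∈ C`, letting a little of the mass that travels from near `x` to near `y` start near `x₁`
instead would lower the cost, as `ϑ` is strictly increasing. So for `q`-a.e. pair `(x, y)` with
`x ∈ C`, the open ball `B(y, |x - y|)` misses `C`; since `μ ⟂ ν` forces `x ≠ y` a.e., `x` is then
touched from outside by a ball of some radius `δ > 0`. Near a fixed outer normal these touching
points form a Lipschitz graph over the orthogonal hyperplane, so they lie in countably many
Lipschitz images of `ℝ^(d-1)`, which `μ` does not charge. Hence `η(C) = 0`; as `θ` lives on `C`,
`η` is the restriction of `μ = θ + η` to the complement of `C`.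
-/

open Metric
open scoped ENNReal NNReal RealInnerProductSpace

lemma exists_lipschitzWith_subset_range {E F : Type*} [NormedAddCommGroup E] [NormedSpace ℝ E]
    [FiniteDimensional ℝ E] [PseudoMetricSpace F] {A : Set E} {p : E → F} {L : ℝ≥0}
    (h : ∀ x ∈ A, ∀ y ∈ A, dist x y ≤ L * dist (p x) (p y)) :
    ∃ (f : F → E) (K : ℝ≥0), LipschitzWith K f ∧ A ⊆ range f := by
  set g := Function.invFunOn p A
  have hg : ∀ x ∈ A, g (p x) ∈ A ∧ p (g (p x)) = p x := fun x hx =>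
    ⟨Function.invFunOn_mem ⟨x, hx, rfl⟩, Function.invFunOn_eq ⟨x, hx, rfl⟩⟩
  have hgp : ∀ x ∈ A, g (p x) = x := fun x hx => by
    have := h _ (hg x hx).1 x hx
    rwa [(hg x hx).2, dist_self, mul_zero, dist_le_zero] at this
  have hlip : LipschitzOnWith L g (p '' A) := by
    refine LipschitzOnWith.of_dist_le_mul ?_
    rintro _ ⟨x, hx, rfl⟩ _ ⟨y, hy, rfl⟩
    rw [hgp x hx, hgp y hy]
    exact h x hx y hy
  obtain ⟨f, hf, hfg⟩ := hlip.extend_finite_dimension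
  refine ⟨f, _, hf, fun x hx => ⟨p x, ?_⟩⟩
  rw [← hfg (mem_image_of_mem p hx), hgp x hx]

section Geometry

variable {E : Type*} [NormedAddCommGroup E] [InnerProductSpace ℝ E]

/-- Pairs `(x, u)` such that the ball of radius `δ` centred at `x + δ • u` touches `C` from
outside at `x`. -/
def exteriorNormals (C : Set E) (δ : ℝ) : Set (E × E) :=
  {z | z.1 ∈ C ∧ ‖z.2‖ = 1 ∧ Disjoint (ball (z.1 + δ • z.2) δ) C}

lemma two_mul_inner_le_norm_sq_of_disjoint_ball {C : Set E} {x x' u : E} {δ : ℝ}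
    (hδ : 0 ≤ δ) (hu : ‖u‖ = 1) (hC : Disjoint (ball (x + δ • u) δ) C) (hx' : x' ∈ C) :
    2 * δ * ⟪x' - x, u⟫ ≤ ‖x' - x‖ ^ 2 := by
  have hfar : δ ≤ ‖(x' - x) - δ • u‖ := by
    have := Set.disjoint_right.1 hC hx'
    rwa [mem_ball, dist_eq_norm, not_lt, sub_add_eq_sub_sub] at this
  have hsq := norm_sub_sq_real (x' - x) (δ • u)
  rw [real_inner_smul_right, norm_smul, Real.norm_eq_abs, hu, mul_one, sq_abs] at hsq
  nlinarith [mul_self_le_mul_self hδ hfar]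

lemma inner_le_half_norm_of_disjoint_ball {C : Set E} {x₁ x₂ u e : E} {δ : ℝ} (hδ : 0 < δ)
    (hu : ‖u‖ = 1) (hC : Disjoint (ball (x₁ + δ • u) δ) C) (hx₂ : x₂ ∈ C)
    (hue : ‖u - e‖ ≤ 1 / 4) (hx : ‖x₂ - x₁‖ ≤ δ / 2) :
    ⟪x₂ - x₁, e⟫ ≤ ‖x₂ - x₁‖ / 2 := by
  have hball := two_mul_inner_le_norm_sq_of_disjoint_ball hδ.le hu hC hx₂
  have hu' : ⟪x₂ - x₁, u⟫ ≤ ‖x₂ - x₁‖ / 4 := by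
    nlinarith [mul_le_mul_of_nonneg_left hx (norm_nonneg (x₂ - x₁))]
  have hue' : ⟪x₂ - x₁, u - e⟫ ≥ -(‖x₂ - x₁‖ / 4) := by
    have := (abs_le.1 (abs_real_inner_le_norm (x₂ - x₁) (u - e))).1
    nlinarith [mul_le_mul_of_nonneg_left hue (norm_nonneg (x₂ - x₁))]
  rw [inner_sub_right] at hue'
  linarith

lemma norm_le_two_mul_norm_orthogonalProjectionOnto {e v : E} (he : ‖e‖ = 1)
    (h : |⟪v, e⟫| ≤ ‖v‖ / 2) : ‖v‖ ≤ 2 * ‖(ℝ ∙ e)ᗮ.orthogonalProjectionOnto v‖ := by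
  have hpyth := Submodule.norm_sq_eq_add_norm_sq_projection v (ℝ ∙ e)
  have hspan : ‖(ℝ ∙ e).orthogonalProjectionOnto v‖ = |⟪v, e⟫| := by
    change ‖(ℝ ∙ e).starProjection v‖ = _
    rw [Submodule.starProjection_singleton, he, norm_smul, Real.norm_eq_abs, he, real_inner_comm]
    simp
  rw [hspan] at hpyth
  nlinarith [norm_nonneg v, norm_nonneg ((ℝ ∙ e)ᗮ.orthogonalProjectionOnto v), abs_nonneg ⟪v, e⟫]

lemma norm_sub_le_two_mul_norm_orthogonalProjectionOnto {C : Set E} {δ : ℝ} (hδ : 0 < δ)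
    {z₀ z₁ z₂ : E × E} (hz₀ : ‖z₀.2‖ = 1)
    (hz₁ : z₁ ∈ exteriorNormals C δ ∩ ball z₀ (min δ 1 / 4))
    (hz₂ : z₂ ∈ exteriorNormals C δ ∩ ball z₀ (min δ 1 / 4)) :
    ‖z₂.1 - z₁.1‖ ≤ 2 * ‖(ℝ ∙ z₀.2)ᗮ.orthogonalProjectionOnto (z₂.1 - z₁.1)‖ := by
  obtain ⟨⟨hx₁, hu₁, hC₁⟩, hz₁₀⟩ := hz₁
  obtain ⟨⟨hx₂, hu₂, hC₂⟩, hz₂₀⟩ := hz₂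
  rw [mem_ball, Prod.dist_eq, max_lt_iff, dist_eq_norm, dist_eq_norm] at hz₁₀ hz₂₀
  have hx : ‖z₂.1 - z₁.1‖ ≤ δ / 2 := by
    have := norm_sub_le_norm_sub_add_norm_sub z₂.1 z₀.1 z₁.1
    rw [norm_sub_rev z₀.1] at this
    linarith [min_le_left δ 1]
  have hu (u : E) (h : ‖u - z₀.2‖ < min δ 1 / 4) : ‖u - z₀.2‖ ≤ 1 / 4 := by
    linarith [min_le_right δ 1]
  refine norm_le_two_mul_norm_orthogonalProjectionOnto hz₀ (abs_le.2 ⟨?_, ?_⟩)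
  · have := inner_le_half_norm_of_disjoint_ball hδ hu₂ hC₂ hx₁ (hu _ hz₂₀.2)
      (by rwa [norm_sub_rev])
    rw [← neg_sub, inner_neg_left, norm_neg] at this
    linarith
  · exact inner_le_half_norm_of_disjoint_ball hδ hu₁ hC₁ hx₂ (hu _ hz₁₀.2) hx

lemma mk_mem_exteriorNormals {C : Set E} {x y : E} (hx : x ∈ C)
    (hmin : ∀ x' ∈ C, ‖x - y‖ ≤ ‖x' - y‖) {δ : ℝ} (hδ : 0 < δ) (hδxy : δ ≤ ‖x - y‖) :
    (x, ‖y - x‖⁻¹ • (y - x)) ∈ exteriorNormals C δ := by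
  rw [norm_sub_rev] at hδxy
  have hxy : 0 < ‖y - x‖ := hδ.trans_le hδxy
  have hcenter : ‖y - (x + δ • ‖y - x‖⁻¹ • (y - x))‖ = ‖y - x‖ - δ := by
    rw [show y - (x + δ • ‖y - x‖⁻¹ • (y - x)) = (1 - δ * ‖y - x‖⁻¹) • (y - x) by module,
      norm_smul, Real.norm_of_nonneg, sub_mul, one_mul, mul_assoc, inv_mul_cancel₀ hxy.ne',
      mul_one]
    rw [sub_nonneg, mul_inv_le_iff₀ hxy, one_mul]
    exact hδxy
  refine ⟨hx, ?_, Set.disjoint_left.2 fun z hz hzC => ?_⟩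
  · rw [norm_smul, norm_inv, norm_norm, inv_mul_cancel₀ hxy.ne']
  · have := norm_sub_le_norm_sub_add_norm_sub z (x + δ • ‖y - x‖⁻¹ • (y - x)) y
    rw [mem_ball, dist_eq_norm] at hz
    rw [norm_sub_rev (x + _) y, hcenter] at this
    linarith [hmin z hzC, norm_sub_rev x y]

end Geometry

lemma finrank_orthogonal_span_singleton_eq_sub_one {d : ℕ} {e : Eucl d} (he : e ≠ 0) :
    Module.finrank ℝ (ℝ ∙ e)ᗮ = d - 1 := by
  have := (ℝ ∙ e).finrank_add_finrank_orthogonal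
  rw [finrank_span_singleton he, finrank_euclideanSpace_fin] at this
  omega

lemma exists_lipschitzWith_fst_exteriorNormals_inter_ball_subset_range {d : ℕ} {C : Set (Eucl d)}
    {δ : ℝ} (hδ : 0 < δ) {z₀ : Eucl d × Eucl d} (hz₀ : ‖z₀.2‖ = 1) :
    ∃ (f : Eucl (d - 1) → Eucl d) (K : ℝ≥0), LipschitzWith K f ∧
      Prod.fst '' (exteriorNormals C δ ∩ ball z₀ (min δ 1 / 4)) ⊆ range f := by
  set P := (ℝ ∙ z₀.2)ᗮ.orthogonalProjectionOnto
  have hdim := finrank_orthogonal_span_singleton_eq_sub_one (norm_ne_zero_iff.1 (hz₀ ▸ one_ne_zero))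
  set iso := ((stdOrthonormalBasis ℝ (ℝ ∙ z₀.2)ᗮ).reindex (finCongr hdim)).repr
  refine exists_lipschitzWith_subset_range (p := fun x => iso (P x)) (L := 2) ?_
  rintro _ ⟨z₁, hz₁, rfl⟩ _ ⟨z₂, hz₂, rfl⟩
  rw [dist_eq_norm, dist_eq_norm, ← map_sub, ← map_sub, LinearIsometryEquiv.norm_map]
  exact_mod_cast norm_sub_le_two_mul_norm_orthogonalProjectionOnto hδ hz₀ hz₂ hz₁

lemma DoesNotChargeSmallSets.measure_fst_exteriorNormals {d : ℕ} {μ : Measure (Eucl d)}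
    (hμ : DoesNotChargeSmallSets d μ) (C : Set (Eucl d)) {δ : ℝ} (hδ : 0 < δ) :
    μ (Prod.fst '' exteriorNormals C δ) = 0 := by
  obtain ⟨t, hts, htc, hcover⟩ := TopologicalSpace.countable_cover_nhdsWithin
    (s := exteriorNormals C δ) (f := fun z => ball z (min δ 1 / 4))
    fun z _ => mem_nhdsWithin_of_mem_nhds (ball_mem_nhds z (by positivity))
  have := htc.to_subtype
  have hchart (z : t) := exists_lipschitzWith_fst_exteriorNormals_inter_ball_subset_range
    (C := C) hδ (hts z.2).2.1
  choose f K hf hfA using hchart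
  refine measure_mono_null ?_ (measure_iUnion_null fun z => hμ (f z) (K z) (hf z))
  rintro _ ⟨z, hz, rfl⟩
  obtain ⟨z₀, hz₀, hzz₀⟩ := mem_iUnion₂.1 (hcover hz)
  exact mem_iUnion.2 ⟨⟨z₀, hz₀⟩, hfA _ ⟨z, ⟨hz, hzz₀⟩, rfl⟩⟩

lemma IsSemicoupling.isFiniteMeasure {d : ℕ} {μ ν : Measure (Eucl d)} [IsFiniteMeasure ν]
    {q : Measure (Eucl d × Eucl d)} (hq : IsSemicoupling μ ν q) : IsFiniteMeasure q := by
  constructor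
  rw [← preimage_univ (f := Prod.snd), ← Measure.map_apply measurable_snd MeasurableSet.univ, hq.2]
  exact measure_lt_top ν univ

lemma IsSemicoupling.quasiMeasurePreserving_fst {d : ℕ} {μ ν : Measure (Eucl d)}
    {q : Measure (Eucl d × Eucl d)} (hq : IsSemicoupling μ ν q) :
    Measure.QuasiMeasurePreserving Prod.fst q μ :=
  ⟨measurable_fst, Measure.absolutelyContinuous_of_le hq.1⟩

lemma IsSemicoupling.quasiMeasurePreserving_snd {d : ℕ} {μ ν : Measure (Eucl d)}
    {q : Measure (Eucl d × Eucl d)} (hq : IsSemicoupling μ ν q) :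
    Measure.QuasiMeasurePreserving Prod.snd q ν :=
  ⟨measurable_snd, hq.2.absolutelyContinuous⟩

lemma measure_diagonal_eq_zero_of_mutuallySingular {α : Type*} [MeasurableSpace α]
    {μ ν : Measure α} {q : Measure (α × α)} (hμν : μ ⟂ₘ ν)
    (hfst : Measure.QuasiMeasurePreserving Prod.fst q μ)
    (hsnd : Measure.QuasiMeasurePreserving Prod.snd q ν) : q {p | p.1 = p.2} = 0 := by
  obtain ⟨S, -, hμS, hνS⟩ := hμν
  refine measure_mono_null (t := Prod.fst ⁻¹' S ∪ Prod.snd ⁻¹' Sᶜ) ?_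
    (measure_union_null (hfst.preimage_null hμS) (hsnd.preimage_null hνS))
  intro p (hp : p.1 = p.2)
  by_cases h : p.1 ∈ S
  · exact Or.inl h
  · exact Or.inr (show p.2 ∉ S from hp ▸ h)

def transportCost {E : Type*} [NormedAddCommGroup E] [MeasurableSpace E] (ϑ : ℝ → ℝ)
    (q : Measure (E × E)) : ℝ≥0∞ :=
  ∫⁻ p, ENNReal.ofReal (ϑ ‖p.1 - p.2‖) ∂q

lemma IsSemicoupling.transportCost_lt_top {d : ℕ} {μ ν : Measure (Eucl d)} [IsFiniteMeasure ν]
    {q : Measure (Eucl d × Eucl d)} (hq : IsSemicoupling μ ν q)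
    (hμ : ∃ K : Set (Eucl d), IsCompact K ∧ μ Kᶜ = 0)
    (hν : ∃ K : Set (Eucl d), IsCompact K ∧ ν Kᶜ = 0)
    {ϑ : ℝ → ℝ} (hϑ : MonotoneOn ϑ (Ici 0)) : transportCost ϑ q < ⊤ := by
  have := hq.isFiniteMeasure
  obtain ⟨K₁, hK₁, hμK₁⟩ := hμ
  obtain ⟨K₂, hK₂, hνK₂⟩ := hν
  obtain ⟨R₁, hR₁, hK₁R₁⟩ := hK₁.isBounded.exists_pos_norm_le
  obtain ⟨R₂, hR₂, hK₂R₂⟩ := hK₂.isBounded.exists_pos_norm_le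
  have hbound : ∀ᵐ p ∂q, ENNReal.ofReal (ϑ ‖p.1 - p.2‖) ≤ ENNReal.ofReal (ϑ (R₁ + R₂)) := by
    filter_upwards [hq.quasiMeasurePreserving_fst.ae (mem_ae_iff.2 hμK₁),
      hq.quasiMeasurePreserving_snd.ae (mem_ae_iff.2 hνK₂)] with p hp₁ hp₂
    refine ENNReal.ofReal_le_ofReal (hϑ (mem_Ici.2 (norm_nonneg _)) (mem_Ici.2 (by positivity)) ?_)
    calc ‖p.1 - p.2‖ ≤ ‖p.1‖ + ‖p.2‖ := norm_sub_le _ _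
      _ ≤ R₁ + R₂ := add_le_add (hK₁R₁ _ hp₁) (hK₂R₂ _ hp₂)
  calc transportCost ϑ q ≤ ∫⁻ _, ENNReal.ofReal (ϑ (R₁ + R₂)) ∂q := lintegral_mono_ae hbound
    _ < ⊤ := by simp [lintegral_const, ENNReal.mul_lt_top]

lemma MeasureTheory.Measure.smul_le_self_of_le_one {γ : Type*} [MeasurableSpace γ] {m : Measure γ}
    {k : ℝ≥0∞} (hk : k ≤ 1) : k • m ≤ m :=
  Measure.le_iff'.2 fun s => by simpa using mul_le_of_le_one_left (zero_le : 0 ≤ m s) hk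

section Reroute

variable {α β : Type*} [MeasurableSpace α] [MeasurableSpace β]

/-- The fraction `c` of the mass of `q` on `S` is given new first coordinates, distributed like the
normalisation of `ρ` and independently of the second coordinates. -/
def reroute (q : Measure (α × β)) (S : Set (α × β)) (ρ : Measure α) (c : ℝ≥0∞) :
    Measure (α × β) :=
  q.restrict Sᶜ + (1 - c) • q.restrict S + (c / ρ univ) • ρ.prod ((q.restrict S).map Prod.snd)

variable {q : Measure (α × β)} {S : Set (α × β)} {ρ : Measure α} {c : ℝ≥0∞}

lemma map_snd_reroute [IsFiniteMeasure q] [IsFiniteMeasure ρ] (hS : MeasurableSet S)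
    (hρ : ρ ≠ 0) (hc : c ≤ 1) : (reroute q S ρ c).map Prod.snd = q.map Prod.snd := by
  rw [reroute, Measure.map_add _ _ measurable_snd, Measure.map_add _ _ measurable_snd,
    Measure.map_smul, Measure.map_smul, Measure.map_snd_prod, smul_smul,
    ENNReal.div_mul_cancel (Measure.measure_univ_ne_zero.2 hρ) (measure_ne_top ρ univ),
    add_assoc, ← add_smul, tsub_add_cancel_of_le hc, one_smul, ← Measure.map_add _ _ measurable_snd,
    Measure.restrict_compl_add_restrict hS]

lemma map_fst_reroute_le [IsFiniteMeasure q] (hS : MeasurableSet S) (hc : c * q S ≤ ρ univ) :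
    (reroute q S ρ c).map Prod.fst ≤ q.map Prod.fst + ρ := by
  rw [reroute, Measure.map_add _ _ measurable_fst, Measure.map_add _ _ measurable_fst,
    Measure.map_smul, Measure.map_smul, Measure.map_fst_prod, smul_smul,
    Measure.map_apply measurable_snd MeasurableSet.univ, preimage_univ,
    Measure.restrict_apply_univ]
  conv_rhs => rw [← Measure.restrict_compl_add_restrict hS (μ := q),
    Measure.map_add _ _ measurable_fst]
  have hk : c / ρ univ * q S ≤ 1 := by
    rw [← ENNReal.mul_div_right_comm]
    exact ENNReal.div_le_of_le_mul (by rwa [one_mul])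
  gcongr
  · exact Measure.smul_le_self_of_le_one tsub_le_self
  · exact Measure.smul_le_self_of_le_one hk

lemma lintegral_reroute_lt [IsFiniteMeasure q] [IsFiniteMeasure ρ] {f : α × β → ℝ≥0∞}
    {a b : ℝ≥0∞} (hS : MeasurableSet S) (hf : ∫⁻ p, f p ∂q ≠ ⊤) (hfS : ∀ p ∈ S, a ≤ f p)
    (hfρ : ∀ᵐ p ∂ρ.prod ((q.restrict S).map Prod.snd), f p ≤ b) (hba : b < a) (hqS : q S ≠ 0)
    (hρ : ρ ≠ 0) (hc₀ : c ≠ 0) (hc₁ : c ≤ 1) :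
    ∫⁻ p, f p ∂reroute q S ρ c < ∫⁻ p, f p ∂q := by
  set I := ∫⁻ p, f p ∂q.restrict S
  set J := ∫⁻ p, f p ∂q.restrict Sᶜ
  have hsplit : ∫⁻ p, f p ∂q = J + I := by
    rw [← lintegral_add_measure, Measure.restrict_compl_add_restrict hS]
  have hI : a * q S ≤ I := by
    calc a * q S = ∫⁻ _, a ∂q.restrict S := by rw [lintegral_const, Measure.restrict_apply_univ]
      _ ≤ I := lintegral_mono_ae ((ae_restrict_iff' hS).2 (Eventually.of_forall hfS))
  have hprod : ∫⁻ p, f p ∂ρ.prod ((q.restrict S).map Prod.snd) ≤ b * (ρ univ * q S) := by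
    calc _ ≤ ∫⁻ _, b ∂ρ.prod ((q.restrict S).map Prod.snd) := lintegral_mono_ae hfρ
      _ = b * (ρ univ * q S) := by
        rw [lintegral_const, ← univ_prod_univ, Measure.prod_prod,
          Measure.map_apply measurable_snd MeasurableSet.univ, preimage_univ,
          Measure.restrict_apply_univ]
  have hgain : c * b * q S < c * I := by
    have hcqS : c * q S ≠ 0 := mul_ne_zero hc₀ hqS
    have hcqS' : c * q S ≠ ⊤ := ENNReal.mul_ne_top (ne_top_of_le_ne_top ENNReal.one_ne_top hc₁)
      (measure_ne_top q S)
    calc c * b * q S = c * q S * b := by ring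
      _ < c * q S * a := ENNReal.mul_lt_mul_right hcqS hcqS' hba
      _ = c * (a * q S) := by ring
      _ ≤ c * I := by gcongr
  have hfin : J + (1 - c) * I ≠ ⊤ := by
    refine ne_top_of_le_ne_top (hsplit ▸ hf) (add_le_add le_rfl ?_)
    exact mul_le_of_le_one_left (zero_le : 0 ≤ I) tsub_le_self
  calc ∫⁻ p, f p ∂reroute q S ρ c
      = J + (1 - c) * I + c / ρ univ * ∫⁻ p, f p ∂ρ.prod ((q.restrict S).map Prod.snd) := by
        rw [reroute, lintegral_add_measure, lintegral_add_measure, lintegral_smul_measure,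
          lintegral_smul_measure, smul_eq_mul, smul_eq_mul]
    _ ≤ J + (1 - c) * I + c * b * q S := by
        refine add_le_add le_rfl ?_
        calc c / ρ univ * ∫⁻ p, f p ∂ρ.prod ((q.restrict S).map Prod.snd)
            ≤ c / ρ univ * (b * (ρ univ * q S)) := by gcongr
          _ = c * b * q S := by
            rw [mul_left_comm b, ← mul_assoc, ← mul_assoc, ENNReal.div_mul_cancel
              (Measure.measure_univ_ne_zero.2 hρ) (measure_ne_top ρ univ), mul_assoc]
    _ < J + (1 - c) * I + c * I := ENNReal.add_lt_add_left hfin hgain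
    _ = ∫⁻ p, f p ∂q := by rw [hsplit, add_assoc, ← add_mul, tsub_add_cancel_of_le hc₁, one_mul]

end Reroute

lemma IsSemicoupling.reroute {d : ℕ} {μ ν : Measure (Eucl d)} [IsFiniteMeasure μ]
    [IsFiniteMeasure ν] {q : Measure (Eucl d × Eucl d)} (hq : IsSemicoupling μ ν q)
    {S : Set (Eucl d × Eucl d)} (hS : MeasurableSet S) {B : Set (Eucl d)} {c : ℝ≥0∞}
    (hB : (μ - q.map Prod.fst).restrict B ≠ 0) (hc : c ≤ 1)
    (hcS : c * q S ≤ (μ - q.map Prod.fst).restrict B univ) :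
    IsSemicoupling μ ν (reroute q S ((μ - q.map Prod.fst).restrict B) c) := by
  have := hq.isFiniteMeasure
  refine ⟨(map_fst_reroute_le hS hcS).trans ?_, (map_snd_reroute hS hB hc).trans hq.2⟩
  calc q.map Prod.fst + (μ - q.map Prod.fst).restrict B
      ≤ q.map Prod.fst + (μ - q.map Prod.fst) := by gcongr; exact Measure.restrict_le_self
    _ = μ := by rw [add_comm, Measure.sub_add_cancel_of_le hq.1]

lemma IsSemicoupling.norm_sub_le_of_mem_support {d : ℕ} {μ ν : Measure (Eucl d)}
    [IsFiniteMeasure μ] [IsFiniteMeasure ν] {q : Measure (Eucl d × Eucl d)}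
    (hq : IsSemicoupling μ ν q) {ϑ : ℝ → ℝ} (hϑ : StrictMonoOn ϑ (Ici 0))
    (hϑ₀ : ∀ x : ℝ, 0 ≤ x → 0 ≤ ϑ x) (hcost : transportCost ϑ q ≠ ⊤)
    (hopt : ∀ q', IsSemicoupling μ ν q' → transportCost ϑ q ≤ transportCost ϑ q')
    {x y x₁ : Eucl d} (hxy : (x, y) ∈ q.support) (hx₁ : x₁ ∈ (μ - q.map Prod.fst).support) :
    ‖x - y‖ ≤ ‖x₁ - y‖ := by
  by_contra! hlt
  have := hq.isFiniteMeasure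
  set r := (‖x - y‖ - ‖x₁ - y‖) / 5
  have hr : 0 < r := div_pos (sub_pos.2 hlt) (by norm_num)
  have hgap : ‖x₁ - y‖ + 4 * r < ‖x - y‖ := by simp only [r]; linarith
  set S := ball x r ×ˢ ball y r
  have hS : MeasurableSet S := measurableSet_ball.prod measurableSet_ball
  set ρ := (μ - q.map Prod.fst).restrict (ball x₁ r)
  have hqS : q S ≠ 0 := ((Measure.mem_support_iff_forall _).1 hxy S
    (by simpa only [S, ball_prod_same] using ball_mem_nhds (x, y) hr)).ne'
  have hρ : ρ ≠ 0 := by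
    rw [Ne, ← Measure.measure_univ_eq_zero, Measure.restrict_apply_univ]
    exact ((Measure.mem_support_iff_forall _).1 hx₁ _ (ball_mem_nhds _ hr)).ne'
  set c := min 1 (ρ univ / q S)
  have hc₀ : c ≠ 0 := (lt_min one_pos (ENNReal.div_pos (Measure.measure_univ_ne_zero.2 hρ)
    (measure_ne_top q S))).ne'
  have hcS : c * q S ≤ ρ univ := calc
    c * q S ≤ ρ univ / q S * q S := by gcongr; exact min_le_right _ _
    _ = ρ univ := ENNReal.div_mul_cancel hqS (measure_ne_top q S)
  refine (hopt _ (hq.reroute hS hρ (min_le_left _ _) hcS)).not_gt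
    (lintegral_reroute_lt (a := ENNReal.ofReal (ϑ (‖x - y‖ - 2 * r)))
      (b := ENNReal.ofReal (ϑ (‖x₁ - y‖ + 2 * r))) hS hcost ?_ ?_ ?_ hqS hρ hc₀ (min_le_left _ _))
  · rintro p ⟨hp₁, hp₂⟩
    rw [mem_ball] at hp₁ hp₂
    refine ENNReal.ofReal_le_ofReal (hϑ.monotoneOn (mem_Ici.2 (by linarith [norm_nonneg (x₁ - y)]))
      (mem_Ici.2 (norm_nonneg _)) ?_)
    have := dist_triangle4 x p.1 p.2 y
    rw [dist_comm x p.1] at this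
    simp only [dist_eq_norm] at this hp₁ hp₂ ⊢
    linarith
  · have hfst : ∀ᵐ x' ∂ρ, x' ∈ ball x₁ r := ae_restrict_mem measurableSet_ball
    have hsnd : ∀ᵐ y' ∂(q.restrict S).map Prod.snd, y' ∈ ball y r :=
      (ae_map_iff measurable_snd.aemeasurable measurableSet_ball).2
        ((ae_restrict_iff' hS).2 (Eventually.of_forall fun p hp => hp.2))
    filter_upwards [Measure.quasiMeasurePreserving_fst.ae hfst,
      Measure.quasiMeasurePreserving_snd.ae hsnd] with p hp₁ hp₂
    rw [mem_ball] at hp₁ hp₂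
    refine ENNReal.ofReal_le_ofReal (hϑ.monotoneOn (mem_Ici.2 (norm_nonneg _))
      (mem_Ici.2 (by positivity)) ?_)
    have := dist_triangle4 p.1 x₁ y p.2
    rw [dist_comm y p.2] at this
    simp only [dist_eq_norm] at this hp₁ hp₂ ⊢
    linarith
  · have h₀ : 0 ≤ ‖x₁ - y‖ + 2 * r := by positivity
    exact (ENNReal.ofReal_lt_ofReal_iff_of_nonneg (hϑ₀ _ h₀)).2
      (hϑ (mem_Ici.2 h₀) (mem_Ici.2 (by linarith)) (by linarith))

lemma IsSemicoupling.map_fst_support_sub_eq_zero {d : ℕ} {μ ν : Measure (Eucl d)}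
    [IsFiniteMeasure μ] [IsFiniteMeasure ν] {q : Measure (Eucl d × Eucl d)}
    (hq : IsSemicoupling μ ν q) (hsmall : DoesNotChargeSmallSets d μ) (hsing : μ ⟂ₘ ν)
    {ϑ : ℝ → ℝ} (hϑ : StrictMonoOn ϑ (Ici 0)) (hϑ₀ : ∀ x : ℝ, 0 ≤ x → 0 ≤ ϑ x)
    (hcost : transportCost ϑ q ≠ ⊤)
    (hopt : ∀ q', IsSemicoupling μ ν q' → transportCost ϑ q ≤ transportCost ϑ q') :
    q.map Prod.fst (μ - q.map Prod.fst).support = 0 := by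
  set C := (μ - q.map Prod.fst).support
  rw [Measure.map_apply measurable_fst Measure.isClosed_support.measurableSet]
  have hN : μ (⋃ k : ℕ, Prod.fst '' exteriorNormals C (1 / (k + 1))) = 0 :=
    measure_iUnion_null fun k => hsmall.measure_fst_exteriorNormals C Nat.one_div_pos_of_nat
  refine measure_mono_null ?_ (measure_union_null (measure_union_null
    Measure.measure_compl_support (measure_diagonal_eq_zero_of_mutuallySingular hsing
      hq.quasiMeasurePreserving_fst hq.quasiMeasurePreserving_snd))
    (hq.quasiMeasurePreserving_fst.preimage_null hN))
  intro p (hp : p.1 ∈ C)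
  by_cases hsupp : p ∈ q.support
  swap; · exact Or.inl (Or.inl hsupp)
  by_cases hdiag : p.1 = p.2
  · exact Or.inl (Or.inr hdiag)
  obtain ⟨k, hk⟩ := exists_nat_one_div_lt (norm_pos_iff.2 (sub_ne_zero.2 hdiag))
  refine Or.inr (mem_iUnion.2 ⟨k, _, mk_mem_exteriorNormals hp
    (fun x' hx' => hq.norm_sub_le_of_mem_support hϑ hϑ₀ hcost hopt hsupp hx') ?_ hk.le, rfl⟩)
  positivity

lemma MeasureTheory.Measure.restrict_compl_eq_of_add_eq {α : Type*} [MeasurableSpace α]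
    {μ θ η : Measure α} {C : Set α} (h : θ + η = μ) (hθ : θ Cᶜ = 0) (hη : η C = 0) :
    μ.restrict Cᶜ = η := by
  rw [← h, Measure.restrict_add, Measure.restrict_eq_zero.2 hθ, zero_add]
  exact Measure.restrict_eq_self_of_ae_mem (compl_mem_ae_iff.2 hη)

theorem optimal_semicoupling_first_marginal_restrict_general
    {d : ℕ}
    (μ ν : Measure (Eucl d)) [IsFiniteMeasure μ] [IsFiniteMeasure ν]
    (hμsupp : ∃ K : Set (Eucl d), IsCompact K ∧ μ Kᶜ = 0)
    (hνsupp : ∃ K : Set (Eucl d), IsCompact K ∧ ν Kᶜ = 0)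
    (hsmall : DoesNotChargeSmallSets d μ)
    (hsing : Measure.MutuallySingular μ ν)
    (ϑ : ℝ → ℝ)
    (hϑmono : StrictMonoOn ϑ (Set.Ici 0))
    (hϑnonneg : ∀ x : ℝ, 0 ≤ x → 0 ≤ ϑ x)
    (q : Measure (Eucl d × Eucl d))
    (hq : IsSemicoupling μ ν q)
    (hopt : ∀ q' : Measure (Eucl d × Eucl d), IsSemicoupling μ ν q' →
      (∫⁻ p, ENNReal.ofReal (ϑ ‖p.1 - p.2‖) ∂q) ≤
        ∫⁻ p, ENNReal.ofReal (ϑ ‖p.1 - p.2‖) ∂q') :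
    ∃ B : Set (Eucl d), MeasurableSet B ∧ Measure.map Prod.fst q = μ.restrict B := by
  have := hq.isFiniteMeasure
  have hcost := (hq.transportCost_lt_top hμsupp hνsupp hϑmono.monotoneOn).ne
  refine ⟨(μ - q.map Prod.fst).supportᶜ, Measure.isOpen_compl_support.measurableSet, ?_⟩
  exact (Measure.restrict_compl_eq_of_add_eq (Measure.sub_add_cancel_of_le hq.1)
    Measure.measure_compl_support
    (hq.map_fst_support_sub_eq_zero hsmall hsing hϑmono hϑnonneg hcost hopt)).symm

/-- **Indicator density of optimal semicouplings.** Under the hypotheses of the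
uniqueness lemma, every optimal semicoupling has first marginal of the form `1_B ⬝ μ`,
i.e. equal to the restriction of `μ` to some Borel set `B`. -/
theorem optimal_semicoupling_first_marginal_restrict
    {d : ℕ} (hd : 1 ≤ d)
    (μ ν : Measure (Eucl d)) [IsFiniteMeasure μ] [IsFiniteMeasure ν]
    (hμsupp : ∃ K : Set (Eucl d), IsCompact K ∧ μ Kᶜ = 0)
    (hνsupp : ∃ K : Set (Eucl d), IsCompact K ∧ ν Kᶜ = 0)
    (hmass : ν Set.univ ≤ μ Set.univ)
    (hsmall : DoesNotChargeSmallSets d μ)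
    (hsing : Measure.MutuallySingular μ ν)
    (ϑ : ℝ → ℝ)
    (hϑc : ContinuousOn ϑ (Set.Ici 0))
    (hϑconc : StrictConcaveOn ℝ (Set.Ici 0) ϑ)
    (hϑmono : StrictMonoOn ϑ (Set.Ici 0))
    (hϑnonneg : ∀ x : ℝ, 0 ≤ x → 0 ≤ ϑ x)
    (q : Measure (Eucl d × Eucl d))
    (hq : IsSemicoupling μ ν q)
    (hopt : ∀ q' : Measure (Eucl d × Eucl d), IsSemicoupling μ ν q' →
      (∫⁻ p, ENNReal.ofReal (ϑ ‖p.1 - p.2‖) ∂q) ≤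
        ∫⁻ p, ENNReal.ofReal (ϑ ‖p.1 - p.2‖) ∂q') :
    ∃ B : Set (Eucl d), MeasurableSet B ∧ Measure.map Prod.fst q = μ.restrict B :=
  optimal_semicoupling_first_marginal_restrict_general μ ν hμsupp hνsupp hsmall hsing ϑ hϑmono
    hϑnonneg q hq hopt
end
end

section
/- Let d ≥ 1 and let x₁, y₀ ∈ ℝ^d with x₁ ≠ y₀. Set u₊ = (y₀ − x₁)/|y₀ − x₁| and u₋ = −u₊, and for a unit vector u and δ, α > 0 define the cone C(x₁, u, δ, α) = {z ∈ ℝ^d : u · (z − x₁) ≥ (1 − δ)|z − x₁|} ∩ {z : |z − x₁| ≤ α}, and set C₋ = C(x₁, u₋, δ, α) \ {x₁} and C₊ = C(x₁, u₊, δ, α) \ {x₁}. Then for every r′ with 0 < r′ < |x₁ − y₀| there exist δ₀ > 0 and α₀ > 0 such that for all 0 < δ ≤ δ₀ and 0 < α ≤ α₀, and for all z₋ ∈ C₋, z₊ ∈ C₊ and all ỹ with |ỹ − y₀| < r′, one has |z₊ − ỹ| < |z₋ − ỹ|. -/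
open MeasureTheory Filter Set

noncomputable section

/-- The cone `C(x₁, u, δ, α)` with apex `x₁`, direction `u`, opening `δ`, radius `α`. -/
def cone {d : ℕ} (x₁ u : Eucl d) (δ α : ℝ) : Set (Eucl d) :=
  {z | (1 - δ) * ‖z - x₁‖ ≤ (inner ℝ u (z - x₁) : ℝ) ∧ ‖z - x₁‖ ≤ α}

/-!
Write `p = zp - x₁`, `q = zm - x₁`, `w = ty - x₁` and `u = u₊`. A vector `p` in the cone of
direction `u` and opening `δ` is close to `‖p‖ u`: `‖p - ‖p‖ u‖² ≤ 2δ‖p‖²`, so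
`⟪p, w⟫ ≥ ‖p‖ (⟪u, w⟫ - √(2δ)‖w‖)`, and symmetrically `⟪q, w⟫ ≤ -‖q‖ (⟪u, w⟫ - √(2δ)‖w‖)`.
Hence `‖p - w‖² - ‖q - w‖² ≤ (‖p‖ + ‖q‖) (‖p‖ - ‖q‖ - 2c)` with `c = ⟪u, w⟫ - √(2δ)‖w‖`.
For `ty` in the ball `B_{r'}(y₀)` we have `⟪u, w⟫ > ‖y₀ - x₁‖ - r' =: ε` and `‖w‖ < 2‖y₀ - x₁‖`,
so `δ ≤ ε² / (32 ‖y₀ - x₁‖²)` gives `c > ε / 2`, and `‖p‖ ≤ α ≤ ε` makes the bound negative.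
-/

open RealInnerProductSpace

section InnerProductSpace

variable {E : Type*} [NormedAddCommGroup E] [InnerProductSpace ℝ E] {u p q w : E} {δ : ℝ}

theorem norm_sub_norm_smul_le_sqrt (hu : ‖u‖ = 1) (hp : (1 - δ) * ‖p‖ ≤ ⟪u, p⟫) :
    ‖p - ‖p‖ • u‖ ≤ √(2 * δ) * ‖p‖ := by
  have hsq : ‖p - ‖p‖ • u‖ ^ 2 ≤ 2 * δ * ‖p‖ ^ 2 := by
    rw [norm_sub_sq_real, norm_smul, real_inner_smul_right, real_inner_comm, norm_norm, hu]
    nlinarith [norm_nonneg p]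
  calc ‖p - ‖p‖ • u‖ ≤ √(2 * δ * ‖p‖ ^ 2) := Real.le_sqrt_of_sq_le hsq
    _ = √(2 * δ) * ‖p‖ := by rw [Real.sqrt_mul' _ (sq_nonneg _), Real.sqrt_sq (norm_nonneg _)]

theorem mul_sub_le_inner (hu : ‖u‖ = 1) (hp : (1 - δ) * ‖p‖ ≤ ⟪u, p⟫) (w : E) :
    ‖p‖ * (⟪u, w⟫ - √(2 * δ) * ‖w‖) ≤ ⟪p, w⟫ := by
  have hdev : -(√(2 * δ) * ‖p‖ * ‖w‖) ≤ ⟪p - ‖p‖ • u, w⟫ := by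
    have := mul_le_mul_of_nonneg_right (norm_sub_norm_smul_le_sqrt hu hp) (norm_nonneg w)
    linarith [neg_le_of_abs_le (abs_real_inner_le_norm (p - ‖p‖ • u) w)]
  rw [inner_sub_left, real_inner_smul_left] at hdev
  linarith

theorem norm_sub_lt_norm_sub_of_opposite_cones (hu : ‖u‖ = 1)
    (hp : (1 - δ) * ‖p‖ ≤ ⟪u, p⟫) (hq : (1 - δ) * ‖q‖ ≤ ⟪-u, q⟫) (hq0 : q ≠ 0)
    (hpw : ‖p‖ ≤ 2 * (⟪u, w⟫ - √(2 * δ) * ‖w‖)) : ‖p - w‖ < ‖q - w‖ := by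
  have hp_inner := mul_sub_le_inner hu hp w
  have hq_inner := mul_sub_le_inner (by rwa [norm_neg]) hq (-w)
  rw [inner_neg_neg, norm_neg, inner_neg_right] at hq_inner
  have hq_pos : 0 < ‖q‖ := norm_pos_iff.2 hq0
  rw [← sq_lt_sq₀ (norm_nonneg _) (norm_nonneg _), norm_sub_sq_real, norm_sub_sq_real]
  nlinarith [norm_nonneg p]

theorem norm_sub_norm_sub_le_inner (y t : E) : ‖y‖ - ‖t - y‖ ≤ ⟪‖y‖⁻¹ • y, t⟫ := by
  rcases eq_or_ne y 0 with rfl | hy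
  · simp
  have hyy : ⟪‖y‖⁻¹ • y, y⟫ = ‖y‖ := by
    rw [real_inner_smul_left, real_inner_self_eq_norm_sq]
    field_simp
  have hu : ‖‖y‖⁻¹ • y‖ = 1 := norm_smul_inv_norm hy
  have hdev := neg_le_of_abs_le (abs_real_inner_le_norm (‖y‖⁻¹ • y) (t - y))
  rw [hu, one_mul, inner_sub_right, hyy] at hdev
  linarith

end InnerProductSpace

theorem cone_inequality_general
    {d : ℕ} (x₁ y₀ : Eucl d) (hne : x₁ ≠ y₀)
    (r' : ℝ) (hr : r' < ‖x₁ - y₀‖) :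
    ∃ δ₀ > (0 : ℝ), ∃ α₀ > (0 : ℝ), ∀ δ α : ℝ,
      0 < δ → δ ≤ δ₀ → 0 < α → α ≤ α₀ →
      ∀ zm ∈ cone x₁ (-(‖y₀ - x₁‖⁻¹ • (y₀ - x₁))) δ α \ {x₁},
      ∀ zp ∈ cone x₁ (‖y₀ - x₁‖⁻¹ • (y₀ - x₁)) δ α \ {x₁},
      ∀ ty : Eucl d, ‖ty - y₀‖ < r' → ‖zp - ty‖ < ‖zm - ty‖ := by
  set R := ‖y₀ - x₁‖
  have hR : 0 < R := norm_pos_iff.2 (sub_ne_zero.2 hne.symm)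
  rw [norm_sub_rev] at hr
  set ε := R - r'
  have hε : 0 < ε := sub_pos.2 hr
  refine ⟨ε ^ 2 / (32 * R ^ 2), by positivity, ε, hε, ?_⟩
  rintro δ α - hδ - hα zm ⟨⟨hm, -⟩, hmx⟩ zp ⟨⟨hp, hpα⟩, -⟩ ty hty
  have hu : ‖‖y₀ - x₁‖⁻¹ • (y₀ - x₁)‖ = 1 := norm_smul_inv_norm (sub_ne_zero.2 hne.symm)
  have hinner := norm_sub_norm_sub_le_inner (y₀ - x₁) (ty - x₁)
  rw [sub_sub_sub_cancel_right] at hinner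
  have hw : ‖ty - x₁‖ < 2 * R := by
    linarith [norm_sub_le_norm_sub_add_norm_sub ty y₀ x₁]
  have hs : √(2 * δ) ≤ ε / (4 * R) := by
    rw [Real.sqrt_le_left (by positivity), div_pow]
    calc 2 * δ ≤ 2 * (ε ^ 2 / (32 * R ^ 2)) := by gcongr
      _ = ε ^ 2 / (4 * R) ^ 2 := by field_simp; ring
  have hsw : √(2 * δ) * ‖ty - x₁‖ ≤ ε / 2 :=
    calc √(2 * δ) * ‖ty - x₁‖ ≤ ε / (4 * R) * (2 * R) := by gcongr
      _ = ε / 2 := by field_simp; ring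
  rw [← sub_sub_sub_cancel_right zp ty x₁, ← sub_sub_sub_cancel_right zm ty x₁]
  exact norm_sub_lt_norm_sub_of_opposite_cones hu hp hm (sub_ne_zero.2 hmx) (by linarith)

/-- **Cone inequality.** For small enough `δ, α > 0`, every point of the cone towards
`y₀` (apex removed) is strictly closer to every `ty ∈ B_{r'}(y₀)` than every point of the
opposite cone (apex removed). -/
theorem cone_inequality
    {d : ℕ} (hd : 1 ≤ d) (x₁ y₀ : Eucl d) (hne : x₁ ≠ y₀)
    (r' : ℝ) (hr0 : 0 < r') (hr : r' < ‖x₁ - y₀‖) :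
    ∃ δ₀ > (0 : ℝ), ∃ α₀ > (0 : ℝ), ∀ δ α : ℝ,
      0 < δ → δ ≤ δ₀ → 0 < α → α ≤ α₀ →
      ∀ zm ∈ cone x₁ (-(‖y₀ - x₁‖⁻¹ • (y₀ - x₁))) δ α \ {x₁},
      ∀ zp ∈ cone x₁ (‖y₀ - x₁‖⁻¹ • (y₀ - x₁)) δ α \ {x₁},
      ∀ ty : Eucl d, ‖ty - y₀‖ < r' → ‖zp - ty‖ < ‖zm - ty‖ :=
  cone_inequality_general x₁ y₀ hne r' hr
end
end

section
/- Let m be a finite Borel measure on [0,∞). Then there exists a function ϑ : [0,∞) → [0,∞) which is continuous, concave, strictly increasing, satisfies ϑ(0) = 0 and lim_{x→∞} ϑ(x) = ∞, and such that ∫_{[0,∞)} ϑ(x) m(dx) < ∞. -/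
/-!
Take levels `a n > 0` with `∑ (a n)⁻¹ < ∞` and put `ϑ x = ∑ n, min x (a n) / a n`. Each summand is
a concave ramp, `(a n)⁻¹`-Lipschitz, rising from `0` to `1` on `[0, a n]`; hence `ϑ` is concave,
Lipschitz and strictly increasing, and `ϑ x ≥ N` once `x ≥ a 0, …, a (N - 1)`. By dominated
convergence `∫ min x c / c ∂m → 0` as `c → ∞`, so the levels can be chosen with
`∫ min x (a n) / a n ∂m ≤ 2⁻ⁿ` and `a n ≥ 2ⁿ`, which makes `∫ ϑ ∂m ≤ ∑ 2⁻ⁿ` finite.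
-/

open MeasureTheory Filter Set Topology

theorem ConcaveOn.tsum {E ι : Type*} [AddCommGroup E] [Module ℝ E] [Nonempty ι] {s : Set E}
    {f : ι → E → ℝ} (hf : ∀ i, ConcaveOn ℝ s (f i)) (hs : ∀ x ∈ s, Summable fun i => f i x) :
    ConcaveOn ℝ s fun x => ∑' i, f i x := by
  have hconv : Convex ℝ s := (hf (Classical.arbitrary ι)).1
  refine ⟨hconv, fun x hx y hy p q hp hq hpq => ?_⟩
  have hcomb : Summable fun i => p • f i x + q • f i y :=
    ((hs x hx).const_smul p).add ((hs y hy).const_smul q)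
  calc p • ∑' i, f i x + q • ∑' i, f i y = ∑' i, (p • f i x + q • f i y) := by
        rw [← (hs x hx).tsum_const_smul, ← (hs y hy).tsum_const_smul,
          ← ((hs x hx).const_smul p).tsum_add ((hs y hy).const_smul q)]
    _ ≤ ∑' i, f i (p • x + q • y) :=
        hcomb.tsum_le_tsum (fun i => (hf i).2 hx hy hp hq hpq) (hs _ (hconv hx hy hp hq hpq))

theorem LipschitzWith.tsum {α ι : Type*} [PseudoMetricSpace α] {f : ι → α → ℝ} {K : ι → NNReal}
    (hf : ∀ i, LipschitzWith (K i) (f i)) (hK : Summable K) (hs : ∀ x, Summable fun i => f i x) :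
    LipschitzWith (∑' i, K i) fun x => ∑' i, f i x := by
  refine LipschitzWith.of_dist_le_mul fun x y => ?_
  have hle : ∀ i, ‖f i x - f i y‖ ≤ K i * dist x y := fun i => (hf i).dist_le_mul x y
  have hK' : Summable fun i => (K i : ℝ) * dist x y := (NNReal.summable_coe.2 hK).mul_right _
  have hnorm : Summable fun i => ‖f i x - f i y‖ := hK'.of_nonneg_of_le (fun _ => norm_nonneg _) hle
  calc dist (∑' i, f i x) (∑' i, f i y) = ‖∑' i, (f i x - f i y)‖ := by
        rw [dist_eq_norm, (hs x).tsum_sub (hs y)]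
    _ ≤ ∑' i, ‖f i x - f i y‖ := norm_tsum_le_tsum_norm hnorm
    _ ≤ ∑' i, (K i : ℝ) * dist x y := hnorm.tsum_le_tsum hle hK'
    _ = (∑' i, K i : NNReal) * dist x y := by rw [tsum_mul_right, NNReal.coe_tsum]

section Ramp

variable {c : ℝ}

theorem concaveOn_min_div (hc : 0 < c) : ConcaveOn ℝ univ fun x : ℝ => min x c / c := by
  simpa only [smul_eq_mul, div_eq_inv_mul, Pi.inf_apply, id_eq] using
    (concaveOn_id convex_univ |>.inf (concaveOn_const c convex_univ)).smul (inv_nonneg.2 hc.le)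

theorem lipschitzWith_min_div (hc : 0 < c) :
    LipschitzWith (Real.toNNReal c⁻¹) fun x : ℝ => min x c / c := by
  refine LipschitzWith.of_dist_le_mul fun x y => ?_
  rw [Real.coe_toNNReal _ (inv_nonneg.2 hc.le), Real.dist_eq, Real.dist_eq, ← sub_div, abs_div,
    abs_of_pos hc, div_eq_inv_mul]
  have h := abs_min_sub_min_le_max x c y c
  rw [sub_self, abs_zero, max_eq_left (abs_nonneg _)] at h
  exact mul_le_mul_of_nonneg_left h (inv_nonneg.2 hc.le)

theorem min_div_le_one (hc : 0 < c) (x : ℝ) : min x c / c ≤ 1 :=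
  (div_le_one hc).2 (min_le_right x c)

theorem min_div_eq_one_of_le (hc : 0 < c) {x : ℝ} (hx : c ≤ x) : min x c / c = 1 := by
  rw [min_eq_right hx, div_self hc.ne']

theorem tendsto_min_div_atTop (x : ℝ) : Tendsto (fun c : ℝ => min x c / c) atTop (𝓝 0) := by
  refine ((tendsto_const_nhds (x := x)).div_atTop tendsto_id).congr' ?_
  filter_upwards [eventually_ge_atTop x] with c hc
  rw [min_eq_left hc, id]

theorem min_div_nonneg (hc : 0 < c) {x : ℝ} (hx : 0 ≤ x) : 0 ≤ min x c / c :=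
  div_nonneg (le_min hx hc.le) hc.le

theorem monotone_min_div (hc : 0 < c) : Monotone fun x : ℝ => min x c / c :=
  fun _ _ hxy => div_le_div_of_nonneg_right (min_le_min_right c hxy) hc.le

end Ramp

noncomputable def sumMinDiv (a : ℕ → ℝ) (x : ℝ) : ℝ := ∑' n, min x (a n) / a n

section SumMinDiv

variable {a : ℕ → ℝ}

theorem sumMinDiv_zero (ha : ∀ n, 0 < a n) : sumMinDiv a 0 = 0 := by
  simp [sumMinDiv, fun n => min_eq_left (ha n).le]

theorem summable_min_div (ha : ∀ n, 0 < a n) (hsum : Summable fun n => (a n)⁻¹) (x : ℝ) :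
    Summable fun n => min x (a n) / a n := by
  refine (hsum.mul_left |x|).of_norm_bounded fun n => ?_
  simpa [min_eq_left (ha n).le, Real.coe_toNNReal _ (inv_nonneg.2 (ha n).le), mul_comm] using
    (lipschitzWith_min_div (ha n)).dist_le_mul x 0

theorem sumMinDiv_nonneg (ha : ∀ n, 0 < a n) {x : ℝ} (hx : 0 ≤ x) : 0 ≤ sumMinDiv a x :=
  tsum_nonneg fun n => min_div_nonneg (ha n) hx

theorem lipschitzWith_sumMinDiv (ha : ∀ n, 0 < a n) (hsum : Summable fun n => (a n)⁻¹) :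
    LipschitzWith (∑' n, Real.toNNReal (a n)⁻¹) (sumMinDiv a) :=
  LipschitzWith.tsum (fun n => lipschitzWith_min_div (ha n)) hsum.toNNReal
    (summable_min_div ha hsum)

theorem concaveOn_sumMinDiv (ha : ∀ n, 0 < a n) (hsum : Summable fun n => (a n)⁻¹) :
    ConcaveOn ℝ univ (sumMinDiv a) :=
  ConcaveOn.tsum (fun n => concaveOn_min_div (ha n)) fun x _ => summable_min_div ha hsum x

theorem tendsto_atTop_of_summable_inv (ha : ∀ n, 0 < a n) (hsum : Summable fun n => (a n)⁻¹) :
    Tendsto a atTop atTop := by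
  have h : Tendsto (fun n => (a n)⁻¹) atTop (𝓝[>] 0) :=
    tendsto_nhdsWithin_iff.2 ⟨hsum.tendsto_atTop_zero, .of_forall fun n => inv_pos.2 (ha n)⟩
  simpa only [Function.comp_def, inv_inv] using tendsto_inv_nhdsGT_zero.comp h

theorem strictMono_sumMinDiv (ha : ∀ n, 0 < a n) (hsum : Summable fun n => (a n)⁻¹) :
    StrictMono (sumMinDiv a) := by
  intro x y hxy
  obtain ⟨N, hN⟩ := ((tendsto_atTop_of_summable_inv ha hsum).eventually_ge_atTop y).exists
  have hlt : min x (a N) / a N < min y (a N) / a N := by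
    rw [min_eq_left (hxy.le.trans hN), min_eq_left hN]
    exact div_lt_div_of_pos_right hxy (ha N)
  exact (summable_min_div ha hsum x).tsum_lt_tsum (fun n => monotone_min_div (ha n) hxy.le) hlt
    (summable_min_div ha hsum y)

theorem tendsto_sumMinDiv_atTop (ha : ∀ n, 0 < a n) (hsum : Summable fun n => (a n)⁻¹) :
    Tendsto (sumMinDiv a) atTop atTop := by
  refine tendsto_atTop.2 fun b => ?_
  obtain ⟨N, hN⟩ := exists_nat_ge b
  filter_upwards [(Finset.range N).eventually_all.2 fun n _ => eventually_ge_atTop (a n),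
    eventually_ge_atTop 0] with x hxa hx
  calc b ≤ N := hN
    _ = ∑ n ∈ Finset.range N, min x (a n) / a n := by
        simp [Finset.sum_congr rfl fun n hn => min_div_eq_one_of_le (ha n) (hxa n hn)]
    _ ≤ sumMinDiv a x :=
        (summable_min_div ha hsum x).sum_le_tsum _ fun n _ => min_div_nonneg (ha n) hx

theorem lintegral_ofReal_sumMinDiv_le (m : Measure ℝ) (ha : ∀ n, 0 < a n)
    (hsum : Summable fun n => (a n)⁻¹) :
    ∫⁻ x, ENNReal.ofReal (sumMinDiv a x) ∂m ≤
      ∑' n, ∫⁻ x, ENNReal.ofReal (min x (a n) / a n) ∂m := by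
  rw [← lintegral_tsum fun n => by fun_prop]
  refine lintegral_mono fun x => ?_
  rcases le_total 0 x with hx | hx
  · exact (ENNReal.ofReal_tsum_of_nonneg (fun n => min_div_nonneg (ha n) hx)
      (summable_min_div ha hsum x)).le
  · rw [ENNReal.ofReal_of_nonpos ((strictMono_sumMinDiv ha hsum).monotone hx |>.trans_eq
      (sumMinDiv_zero ha))]
    exact zero_le

end SumMinDiv

theorem tendsto_lintegral_min_div_atTop (m : Measure ℝ) [IsFiniteMeasure m] :
    Tendsto (fun c : ℝ => ∫⁻ x, ENNReal.ofReal (min x c / c) ∂m) atTop (𝓝 0) := by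
  have hlim : ∀ x : ℝ, Tendsto (fun c : ℝ => ENNReal.ofReal (min x c / c)) atTop (𝓝 0) :=
    fun x => ENNReal.ofReal_zero ▸ (ENNReal.continuous_ofReal.tendsto 0).comp
      (tendsto_min_div_atTop x)
  simpa using tendsto_lintegral_filter_of_dominated_convergence (μ := m) 1
    (.of_forall fun c => by fun_prop)
    ((eventually_gt_atTop 0).mono fun c hc => .of_forall fun x =>
      ENNReal.ofReal_le_one.2 (min_div_le_one hc x))
    (by simp) (.of_forall hlim)

theorem exists_seq_summable_inv_lintegral_min_div_le (m : Measure ℝ) [IsFiniteMeasure m] :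
    ∃ a : ℕ → ℝ, (∀ n, 0 < a n) ∧ Summable (fun n => (a n)⁻¹) ∧
      ∀ n, ∫⁻ x, ENNReal.ofReal (min x (a n) / a n) ∂m ≤ 2⁻¹ ^ n := by
  have h : ∀ n : ℕ, ∃ c : ℝ, ∫⁻ x, ENNReal.ofReal (min x c / c) ∂m ≤ 2⁻¹ ^ n ∧ 2 ^ n ≤ c :=
    fun n => (((tendsto_lintegral_min_div_atTop m).eventually
      (eventually_le_nhds (ENNReal.pow_pos (by simp) n))).and (eventually_ge_atTop _)).exists
  choose a hint hpow using h
  have ha n : 0 < a n := (pow_pos two_pos n).trans_le (hpow n)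
  refine ⟨a, ha, summable_geometric_two.of_nonneg_of_le (fun n => (inv_pos.2 (ha n)).le)
    fun n => ?_, hint⟩
  rw [one_div, inv_pow]
  exact inv_anti₀ (pow_pos two_pos n) (hpow n)

theorem exists_concave_integrable_of_finite_measure_general
    (m : Measure ℝ) [IsFiniteMeasure m] :
    ∃ ϑ : ℝ → ℝ,
      ContinuousOn ϑ (Set.Ici 0) ∧
      ConcaveOn ℝ (Set.Ici 0) ϑ ∧
      StrictMonoOn ϑ (Set.Ici 0) ∧
      ϑ 0 = 0 ∧
      (∀ x : ℝ, 0 ≤ x → 0 ≤ ϑ x) ∧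
      Tendsto ϑ atTop atTop ∧
      (∫⁻ x, ENNReal.ofReal (ϑ x) ∂m) < ⊤ := by
  obtain ⟨a, ha, hsum, hint⟩ := exists_seq_summable_inv_lintegral_min_div_le m
  refine ⟨sumMinDiv a, (lipschitzWith_sumMinDiv ha hsum).continuous.continuousOn,
    (concaveOn_sumMinDiv ha hsum).subset (subset_univ _) (convex_Ici 0),
    (strictMono_sumMinDiv ha hsum).strictMonoOn _, sumMinDiv_zero ha,
    fun _ => sumMinDiv_nonneg ha, tendsto_sumMinDiv_atTop ha hsum, ?_⟩
  calc ∫⁻ x, ENNReal.ofReal (sumMinDiv a x) ∂m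
      ≤ ∑' n, ∫⁻ x, ENNReal.ofReal (min x (a n) / a n) ∂m :=
        lintegral_ofReal_sumMinDiv_le m ha hsum
    _ ≤ ∑' n : ℕ, 2⁻¹ ^ n := ENNReal.tsum_le_tsum hint
    _ < ⊤ := tsum_geometric_lt_top.2 (by norm_num)

/-- For every finite Borel measure `m` on `[0,∞)` there is a continuous, concave,
strictly increasing function `ϑ : [0,∞) → [0,∞)` with `ϑ 0 = 0` and `ϑ → ∞` which is
`m`-integrable. -/
theorem exists_concave_integrable_of_finite_measure
    (m : Measure ℝ) [IsFiniteMeasure m] (hm : m (Set.Iio 0) = 0) :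
    ∃ ϑ : ℝ → ℝ,
      ContinuousOn ϑ (Set.Ici 0) ∧
      ConcaveOn ℝ (Set.Ici 0) ϑ ∧
      StrictMonoOn ϑ (Set.Ici 0) ∧
      ϑ 0 = 0 ∧
      (∀ x : ℝ, 0 ≤ x → 0 ≤ ϑ x) ∧
      Tendsto ϑ atTop atTop ∧
      (∫⁻ x, ENNReal.ofReal (ϑ x) ∂m) < ⊤ :=
  exists_concave_integrable_of_finite_measure_general m
end
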